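/- arXiv:1604.04775 — 6 statements merged into one kernel-verified Lean document; each statement's English description precedes it below -/
import Mathlib

section
/- For every natural number n ≥ 1, the 5-adic valuation of the n-th Fibonacci number equals the 5-adic valuation of n, that is, ν₅(F_n) = ν₅(n). -/
private lemma fibZ_add (m n : ℕ) :
    (Nat.fib (m + n + 1) : ℤ) = Nat.fib m * Nat.fib n + Nat.fib (m + 1) * Nat.fib (n + 1) := by
  exact_mod_cast Nat.fib_add m n

private lemma cassiniZ : ∀ m : ℕ,
    (Nat.fib (m + 1) : ℤ) ^ 2 - Nat.fib (m + 1) * Nat.fib m - (Nat.fib m : ℤ) ^ 2 = (-1) ^ m := by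
  intro m
  induction m with
  | zero => simp
  | succ k ih =>
    have h2 : (Nat.fib (k + 2) : ℤ) = Nat.fib k + Nat.fib (k + 1) := by
      exact_mod_cast Nat.fib_add_two
    rw [pow_succ, h2]
    linear_combination (-1 : ℤ) * ih

private lemma fib_five_mul (m : ℕ) :
    (Nat.fib (5 * m) : ℤ) =
      Nat.fib m * (25 * (Nat.fib m : ℤ) ^ 4 + 25 * (-1) ^ m * (Nat.fib m : ℤ) ^ 2 + 5) := by
  cases m with
  | zero => simp
  | succ k =>
    have casm : ((Nat.fib (k + 2) : ℤ)) ^ 2 - Nat.fib (k + 2) * Nat.fib (k + 1)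
        - (Nat.fib (k + 1) : ℤ) ^ 2 = (-1) ^ (k + 1) := cassiniZ (k + 1)
    have hc2 : ((-1 : ℤ) ^ (k + 1)) ^ 2 = 1 := by
      rw [← pow_mul, mul_comm, pow_mul]; norm_num
    have hk : (Nat.fib k : ℤ) = Nat.fib (k + 2) - Nat.fib (k + 1) := by
      have : Nat.fib (k + 2) = Nat.fib k + Nat.fib (k + 1) := Nat.fib_add_two
      push_cast [this]; ring
    have e21 : (Nat.fib (k + k + 1) : ℤ)
        = ((Nat.fib (k + 2) : ℤ) - Nat.fib (k + 1)) ^ 2 + (Nat.fib (k + 1) : ℤ) ^ 2 := by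
      rw [fibZ_add k k, hk]; ring
    have e22 : (Nat.fib (k + (k + 1) + 1) : ℤ)
        = ((Nat.fib (k + 2) : ℤ) - Nat.fib (k + 1)) * Nat.fib (k + 1)
          + (Nat.fib (k + 1) : ℤ) * Nat.fib (k + 2) := by
      rw [fibZ_add k (k + 1), hk]
    have e23 : (Nat.fib ((k + 1) + (k + 1) + 1) : ℤ)
        = (Nat.fib (k + 1) : ℤ) ^ 2 + (Nat.fib (k + 2) : ℤ) ^ 2 := by
      rw [fibZ_add (k + 1) (k + 1)]; ring
    have e32 : (Nat.fib (k + (k + k + 1) + 1) : ℤ)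
        = (Nat.fib k : ℤ) * Nat.fib (k + k + 1)
          + (Nat.fib (k + 1) : ℤ) * Nat.fib (k + k + 2) := by
      rw [fibZ_add k (k + k + 1)]
    have e33 : (Nat.fib ((k + 1) + (k + k + 1) + 1) : ℤ)
        = (Nat.fib (k + 1) : ℤ) * Nat.fib (k + k + 1)
          + (Nat.fib (k + 2) : ℤ) * Nat.fib (k + k + 2) := by
      rw [fibZ_add (k + 1) (k + k + 1)]
    have e5 : (Nat.fib (5 * (k + 1)) : ℤ)
        = (Nat.fib (2 * k + 2) : ℤ) * Nat.fib (3 * k + 2)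
          + (Nat.fib (2 * k + 3) : ℤ) * Nat.fib (3 * k + 3) := by
      have h : 5 * (k + 1) = (2 * k + 2) + (3 * k + 2) + 1 := by ring
      rw [h, fibZ_add]
    -- normalize indices
    have i1 : 2 * k + 2 = k + (k + 1) + 1 := by ring
    have i2 : 2 * k + 3 = (k + 1) + (k + 1) + 1 := by ring
    have i3 : 3 * k + 2 = k + (k + k + 1) + 1 := by ring
    have i4 : 3 * k + 3 = (k + 1) + (k + k + 1) + 1 := by ring
    have i5 : k + k + 2 = k + (k + 1) + 1 := by ring
    rw [i1, i2, i3, i4] at e5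
    rw [i5] at e32 e33
    rw [e22, e23, e32, e33, e21, e22, hk] at e5
    set a := (Nat.fib (k + 1) : ℤ)
    set b := (Nat.fib (k + 2) : ℤ)
    set c := ((-1 : ℤ) ^ (k + 1))
    rw [e5]
    linear_combination (25 * a ^ 3 + 5 * a * ((b ^ 2 - b * a - a ^ 2) + c)) * casm
      + 5 * a * hc2

private lemma five_dvd_of_dvd_fib {n : ℕ} (h : 5 ∣ Nat.fib n) : 5 ∣ n := by
  have hg : Nat.fib (Nat.gcd 5 n) = Nat.gcd (Nat.fib 5) (Nat.fib n) := Nat.fib_gcd 5 n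
  have h5 : Nat.fib 5 = 5 := by decide
  rw [h5, Nat.gcd_eq_left h] at hg
  have hd : Nat.gcd 5 n ∣ 5 := Nat.gcd_dvd_left 5 n
  have hp : Nat.Prime 5 := by norm_num
  rcases (Nat.Prime.eq_one_or_self_of_dvd hp _ hd) with h1 | h1
  · rw [h1] at hg; simp [Nat.fib_one] at hg
  · rw [← h1]; exact Nat.gcd_dvd_right 5 n

theorem fib_five_adic_valuation (n : ℕ) (hn : 1 ≤ n) :
    padicValNat 5 (Nat.fib n) = padicValNat 5 n := by
  haveI : Fact (Nat.Prime 5) := ⟨by norm_num⟩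
  induction n using Nat.strong_induction_on with
  | _ n ih =>
    by_cases h5 : 5 ∣ n
    · obtain ⟨m, rfl⟩ := h5
      have hm : 1 ≤ m := by omega
      have hA1 : 1 ≤ (Nat.fib m : ℤ) := by exact_mod_cast Nat.fib_pos.mpr hm
      set A := (Nat.fib m : ℤ) with hAdef
      set e := ((-1 : ℤ) ^ m) with hedef
      have he : e = 1 ∨ e = -1 := by
        rcases Nat.even_or_odd m with h | h
        · left; exact h.neg_one_pow
        · right; exact h.neg_one_pow
      have hA2 : A ^ 2 ≤ A ^ 4 := by
        nlinarith [mul_nonneg (mul_nonneg (sq_nonneg A) (sub_nonneg.mpr hA1)) (show (0:ℤ) ≤ A + 1 by linarith)]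
      have hpos : (0 : ℤ) ≤ 5 * A ^ 4 + 5 * e * A ^ 2 + 1 := by
        rcases he with h | h <;> rw [h] <;> nlinarith
      obtain ⟨s, hs⟩ : ∃ s : ℕ, (s : ℤ) = 5 * A ^ 4 + 5 * e * A ^ 2 + 1 :=
        ⟨(5 * A ^ 4 + 5 * e * A ^ 2 + 1).toNat, Int.toNat_of_nonneg hpos⟩
      have key := fib_five_mul m
      have hnat : Nat.fib (5 * m) = Nat.fib m * (5 * s) := by
        have : (Nat.fib (5 * m) : ℤ) = ((Nat.fib m * (5 * s) : ℕ) : ℤ) := by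
          push_cast
          rw [hs, key]
          ring
        exact_mod_cast this
      have hnd : ¬ (5 : ℕ) ∣ s := by
        intro hd
        have hd' : (5 : ℤ) ∣ (s : ℤ) := by exact_mod_cast hd
        have hd1 : (5 : ℤ) ∣ (s : ℤ) - (5 * A ^ 4 + 5 * e * A ^ 2) :=
          dvd_sub hd' ⟨A ^ 4 + e * A ^ 2, by ring⟩
        rw [hs] at hd1
        have : (5 : ℤ) ∣ 1 := by
          have h1 : (s : ℤ) - (5 * A ^ 4 + 5 * e * A ^ 2) = 1 := by rw [hs]; ring
          rw [hs] at h1; rwa [h1] at hd1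
        norm_num at this
      have hs0 : s ≠ 0 := fun h => hnd (h ▸ dvd_zero 5)
      have hfm : Nat.fib m ≠ 0 := (Nat.fib_pos.mpr hm).ne'
      rw [hnat, padicValNat.mul hfm (by positivity),
        padicValNat.mul (by norm_num) hs0, padicValNat.self (by norm_num),
        padicValNat.eq_zero_of_not_dvd hnd,
        padicValNat.mul (p := 5) (by norm_num) (by omega),
        padicValNat.self (by norm_num), ih m (by omega) hm]
      omega
    · rw [padicValNat.eq_zero_of_not_dvd (fun h => h5 (five_dvd_of_dvd_fib h)),
        padicValNat.eq_zero_of_not_dvd h5]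
end

section
/- Fibonomial coefficients are integers: for all natural numbers n and k with 0 ≤ k ≤ n, the product k!_F·(n-k)!_F divides n!_F, where m!_F = F_m·F_{m-1}···F_1 and 0!_F = 1. -/
/-- The fibotorial `n!_F = F_n · F_{n-1} ⋯ F_1`, with `0!_F = 1`. -/
def fibotorial (n : ℕ) : ℕ := ∏ i ∈ Finset.range n, Nat.fib (i + 1)

lemma fibotorial_succ (m : ℕ) : fibotorial (m + 1) = fibotorial m * Nat.fib (m + 1) :=
  Finset.prod_range_succ _ _

theorem fibotorial_mul_fibotorial_dvd (n k : ℕ) (h : k ≤ n) :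
    fibotorial k * fibotorial (n - k) ∣ fibotorial n := by
  induction n generalizing k with
  | zero =>
    interval_cases k
    simp [fibotorial]
  | succ n ih =>
    rcases Nat.eq_zero_or_pos k with rfl | hk
    · simp [fibotorial]
    rcases eq_or_lt_of_le h with rfl | hlt
    · simp [fibotorial]
    obtain ⟨j, rfl⟩ : ∃ j, k = j + 1 := ⟨k - 1, (Nat.succ_pred_eq_of_pos hk).symm⟩
    have hjn : j + 1 ≤ n := Nat.lt_succ_iff.mp hlt
    have hjn' : j ≤ n := le_trans (Nat.le_succ j) hjn
    have hsub : j + (n - j) = n := Nat.add_sub_cancel' hjn'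
    have hfib : Nat.fib (n + 1) =
        Nat.fib j * Nat.fib (n - j) + Nat.fib (j + 1) * Nat.fib (n - j + 1) := by
      conv_lhs => rw [← hsub]
      exact Nat.fib_add j (n - j)
    have hnj1 : (n - j - 1) + 1 = n - j := by omega
    have hnjfac : fibotorial (n - j) = fibotorial (n - j - 1) * Nat.fib (n - j) := by
      rw [← hnj1, fibotorial_succ, hnj1]
    have hA : fibotorial (j + 1) * fibotorial (n + 1 - (j + 1)) ∣
        Nat.fib j * Nat.fib (n - j) * fibotorial n := by
      have h1 : fibotorial (j + 1) * fibotorial (n - (j + 1)) ∣ fibotorial n := ih (j + 1) hjn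
      have h2 : n - (j + 1) = n - j - 1 := by omega
      have : fibotorial (j + 1) * fibotorial (n - j) ∣ Nat.fib (n - j) * fibotorial n := by
        rw [hnjfac]
        calc fibotorial (j + 1) * (fibotorial (n - j - 1) * Nat.fib (n - j))
            = Nat.fib (n - j) * (fibotorial (j + 1) * fibotorial (n - (j + 1))) := by
              rw [h2]; ring
          _ ∣ Nat.fib (n - j) * fibotorial n := mul_dvd_mul_left _ h1
      have h3 : n + 1 - (j + 1) = n - j := by omega
      rw [h3]
      exact (dvd_mul_of_dvd_right this (Nat.fib j)).trans (dvd_of_eq (by ring))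
    have hB : fibotorial (j + 1) * fibotorial (n + 1 - (j + 1)) ∣
        Nat.fib (j + 1) * Nat.fib (n - j + 1) * fibotorial n := by
      have h1 : fibotorial j * fibotorial (n - j) ∣ fibotorial n := ih j hjn'
      have h3 : n + 1 - (j + 1) = n - j := by omega
      rw [h3]
      calc fibotorial (j + 1) * fibotorial (n - j)
          = Nat.fib (j + 1) * (fibotorial j * fibotorial (n - j)) := by
            rw [fibotorial_succ]; ring
        _ ∣ Nat.fib (j + 1) * fibotorial n := mul_dvd_mul_left _ h1
        _ ∣ Nat.fib (j + 1) * Nat.fib (n - j + 1) * fibotorial n := ⟨Nat.fib (n - j + 1), by ring⟩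
    have : fibotorial (n + 1) =
        Nat.fib j * Nat.fib (n - j) * fibotorial n +
        Nat.fib (j + 1) * Nat.fib (n - j + 1) * fibotorial n := by
      rw [fibotorial_succ, hfib]; ring
    rw [this]
    exact dvd_add hA hB
end

section
/- (Hoggatt–Bergum) If p is an odd prime and p divides the Fibonacci number F_n, then p^k divides F_{n·p^{k-1}} for all k ≥ 1. -/
open Nat

private lemma hb_key (m j : ℕ) :
    ((fib ((m+1)*(j+1)) : ℤ) ≡ (j+1) * fib (m+1) * (fib (m+2))^j
        [ZMOD ((fib (m+1) : ℤ))^2]) ∧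
    ((fib ((m+1)*(j+1)+1) : ℤ) ≡ ((fib (m+2) : ℤ))^(j+1)
        [ZMOD ((fib (m+1) : ℤ))^2]) := by
  induction j with
  | zero => constructor <;> simp
  | succ j ih =>
    obtain ⟨hA, hB⟩ := ih
    set f : ℤ := (fib (m+1) : ℤ) with hf
    set c : ℤ := (fib (m+2) : ℤ) with hc
    set A : ℤ := (fib ((m+1)*(j+1)) : ℤ) with hAdef
    set B : ℤ := (fib ((m+1)*(j+1)+1) : ℤ) with hBdef
    have hfA : f ∣ A := by
      rw [hf, hAdef]
      exact_mod_cast fib_dvd (m+1) ((m+1)*(j+1)) (Dvd.intro _ rfl)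
    have hfA2 : f * A ≡ 0 [ZMOD f^2] := by
      obtain ⟨t, ht⟩ := hfA
      exact (Int.modEq_iff_dvd.mpr ⟨t, by rw [ht]; ring⟩).symm
    have e1 : (fib ((m+1)*(j+2)) : ℤ) = (fib m : ℤ) * A + f * B := by
      have h : (m+1)*(j+2) = m + (m+1)*(j+1) + 1 := by ring
      rw [h, fib_add]; push_cast; ring
    have e2 : (fib ((m+1)*(j+2)+1) : ℤ) = f * A + c * B := by
      have h : (m+1)*(j+2)+1 = (m+1) + (m+1)*(j+1) + 1 := by ring
      rw [h, fib_add]; push_cast; ring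
    have hcm : (fib m : ℤ) = c - f := by
      have h : fib (m+2) = fib m + fib (m+1) := fib_add_two
      rw [hc, hf, h]; push_cast; ring
    constructor
    · rw [e1, hcm]
      have : (c - f) * A + f * B = c * A + f * B - f * A := by ring
      rw [this]
      calc c * A + f * B - f * A
          ≡ c * ((j+1) * f * c^j) + f * c^(j+1) - 0 [ZMOD f^2] :=
            ((hA.mul_left c).add (hB.mul_left f)).sub hfA2
        _ = (↑(j+1)+1) * f * c^(j+1) := by push_cast; ring
    · rw [e2]
      calc f * A + c * B ≡ 0 + c * c^(j+1) [ZMOD f^2] :=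
            hfA2.add (hB.mul_left c)
        _ = c^(j+2) := by ring

/-- Hoggatt–Bergum: if `p` is an odd prime and `p ∣ F_n`, then `p^k ∣ F_{n·p^(k-1)}`
for all `k ≥ 1`. -/
theorem hoggatt_bergum (p : ℕ) (hp : p.Prime) (hodd : Odd p) (n : ℕ)
    (hdvd : p ∣ Nat.fib n) (k : ℕ) (hk : 1 ≤ k) :
    p ^ k ∣ Nat.fib (n * p ^ (k - 1)) := by
  rcases Nat.eq_zero_or_pos n with rfl | hn
  · simp
  induction k, hk using Nat.le_induction with
  | base => simpa using hdvd
  | succ k hk ih =>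
    have hm1 : 1 ≤ n * p ^ (k - 1) := Nat.mul_pos hn (pow_pos hp.pos _)
    obtain ⟨m0, hm0⟩ : ∃ m0, n * p ^ (k - 1) = m0 + 1 :=
      ⟨n * p ^ (k - 1) - 1, (Nat.succ_pred_eq_of_pos hm1).symm⟩
    obtain ⟨p0, hp0⟩ : ∃ p0, p = p0 + 1 := ⟨p - 1, (Nat.succ_pred_eq_of_pos hp.pos).symm⟩
    have hgoal : n * p ^ (k + 1 - 1) = (m0 + 1) * p := by
      have h : k = (k - 1) + 1 := (Nat.succ_pred_eq_of_pos hk).symm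
      rw [Nat.add_sub_cancel, h, pow_succ, ← mul_assoc, hm0]
    rw [hgoal, hp0]
    rw [hm0, hp0] at ih
    have key := (hb_key m0 p0).1
    have ihz : ((p0+1 : ℕ) : ℤ)^k ∣ (fib (m0+1) : ℤ) := by exact_mod_cast ih
    have h1 : ((p0+1 : ℕ) : ℤ)^(k+1) ∣
        ((p0 : ℤ)+1) * (fib (m0+1) : ℤ) * (fib (m0+2) : ℤ)^p0 := by
      have he : ((p0+1 : ℕ) : ℤ)^(k+1) = ((p0+1 : ℕ) : ℤ) * ((p0+1 : ℕ) : ℤ)^k := by ring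
      rw [he]
      have : ((p0+1 : ℕ) : ℤ) = (p0 : ℤ)+1 := by push_cast; ring
      rw [this]
      exact Dvd.dvd.mul_right (mul_dvd_mul_left _ (by rw [← this]; exact ihz)) _
    have h2 : ((p0+1 : ℕ) : ℤ)^(k+1) ∣ ((fib (m0+1) : ℤ))^2 := by
      calc ((p0+1 : ℕ) : ℤ)^(k+1) ∣ ((p0+1 : ℕ) : ℤ)^(2*k) := pow_dvd_pow _ (by omega)
        _ = (((p0+1 : ℕ) : ℤ)^k)^2 := by ring
        _ ∣ _ := pow_dvd_pow_of_dvd ihz 2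
    have hd : ((fib (m0+1) : ℤ))^2 ∣
        (fib ((m0+1)*(p0+1)) : ℤ) - ((p0 : ℤ)+1) * (fib (m0+1)) * (fib (m0+2))^p0 :=
      Int.ModEq.dvd key.symm
    have h5 := dvd_add (h2.trans hd) h1
    rw [sub_add_cancel] at h5
    exact_mod_cast h5
end

section
/- Let p be an odd prime and n a positive integer. If ν_p(F_n) = k with k > 0, then ν_p(F_{n·p}) = k + 1. -/
open Nat

private lemma fib_key_aux (n : ℕ) (hn : 0 < n) :
    ∀ j : ℕ, 1 ≤ j →
    ∃ e f : ℤ,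
      (Nat.fib (j * n) : ℤ) =
        (j : ℤ) * (Nat.fib n : ℤ) * (Nat.fib (n + 1) : ℤ) ^ (j - 1)
          + e * (Nat.fib n : ℤ) ^ 2 ∧
      (Nat.fib (j * n + 1) : ℤ) = (Nat.fib (n + 1) : ℤ) ^ j + f * (Nat.fib n : ℤ) ^ 2 ∧
      (Nat.fib n : ℤ) ∣
        (2 * e * (Nat.fib (n + 1) : ℤ) ^ 2
          + (j : ℤ) * ((j : ℤ) - 1) * (Nat.fib (n + 1) : ℤ) ^ j) := by
  intro j hj
  induction j, hj using Nat.le_induction with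
  | base =>
    refine ⟨0, 0, by simp, by simp, by simp⟩
  | succ j hj IH =>
    obtain ⟨e, f, ha, hb, ⟨d, hd⟩⟩ := IH
    set c : ℤ := (Nat.fib n : ℤ) with hc
    set t : ℤ := (Nat.fib (n + 1) : ℤ) with ht
    obtain ⟨i, rfl⟩ : ∃ i, j = i + 1 := ⟨j - 1, (Nat.succ_pred_eq_of_pos hj).symm⟩
    have hm : 1 ≤ (i + 1) * n := Nat.one_le_iff_ne_zero.mpr (by positivity)
    obtain ⟨m, hm'⟩ : ∃ m, (i + 1) * n = m + 1 := ⟨(i+1)*n - 1, (Nat.succ_pred_eq_of_pos hm).symm⟩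
    -- fib (m + n + 1) = fib m * fib n + fib (m+1) * fib (n+1)
    have key1 : (Nat.fib ((i + 1) * n + n) : ℤ)
        = ((Nat.fib ((i+1)*n + 1) : ℤ) - (Nat.fib ((i+1)*n) : ℤ)) * c
          + (Nat.fib ((i+1)*n) : ℤ) * t := by
      have h1 : Nat.fib ((i+1)*n + n) = Nat.fib m * Nat.fib n + Nat.fib (m+1) * Nat.fib (n+1) := by
        rw [hm']; rw [show m + 1 + n = m + n + 1 by ring]; exact Nat.fib_add m n
      have h2 : (Nat.fib m : ℤ) = (Nat.fib ((i+1)*n + 1) : ℤ) - (Nat.fib ((i+1)*n) : ℤ) := by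
        have h3 : Nat.fib (m + 2) = Nat.fib m + Nat.fib (m + 1) := Nat.fib_add_two
        have h4 : m + 2 = (i+1)*n + 1 := by omega
        have h5 : m + 1 = (i+1)*n := by omega
        rw [h4, h5] at h3
        omega
      rw [h1]; push_cast; rw [h2, ← hm', hc, ht]
    have key2 : (Nat.fib ((i + 1) * n + n + 1) : ℤ)
        = (Nat.fib ((i+1)*n) : ℤ) * c + (Nat.fib ((i+1)*n + 1) : ℤ) * t := by
      have := Nat.fib_add ((i+1)*n) n
      rw [this]; push_cast; ring
    refine ⟨e * t + f * c - e * c - (i + 1 : ℤ) * t ^ i,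
            (i + 1 : ℤ) * t ^ i + e * c + f * t, ?_, ?_, ?_⟩
    · have : (i + 1 + 1) * n = (i + 1) * n + n := by ring
      rw [this, key1, ha, hb]
      simp only [Nat.add_sub_cancel]
      push_cast
      ring
    · have : (i + 1 + 1) * n + 1 = (i + 1) * n + n + 1 := by ring
      rw [this, key2, ha, hb]
      simp only [Nat.add_sub_cancel]
      push_cast
      ring
    · refine ⟨t * d + 2 * f * t ^ 2 - 2 * e * t ^ 2, ?_⟩
      have hd' : 2 * e * t ^ 2 + ((i:ℤ) + 1) * ((i:ℤ) + 1 - 1) * t ^ (i + 1) = c * d := by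
        simpa using hd
      push_cast
      linear_combination t * hd'

theorem padicValNat_fib_mul_prime (p : ℕ) (hp : p.Prime) (hodd : Odd p)
    (n : ℕ) (hn : 0 < n) (k : ℕ) (hk : 0 < k)
    (hval : padicValNat p (Nat.fib n) = k) :
    padicValNat p (Nat.fib (n * p)) = k + 1 := by
  haveI : Fact p.Prime := ⟨hp⟩
  set c : ℤ := (Nat.fib n : ℤ) with hc
  set t : ℤ := (Nat.fib (n + 1) : ℤ) with ht
  have hfibpos : 0 < Nat.fib n := Nat.fib_pos.mpr hn
  have hpdvd : p ∣ Nat.fib n := by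
    by_contra h
    rw [padicValNat.eq_zero_of_not_dvd h] at hval
    omega
  have hpc : (p : ℤ) ∣ c := Int.natCast_dvd_natCast.mpr hpdvd
  have hpt : ¬ (p : ℤ) ∣ t := by
    rw [ht, Int.natCast_dvd_natCast]
    intro h
    have hcop := Nat.fib_coprime_fib_succ n
    have : p ∣ 1 := (Nat.dvd_gcd hpdvd h).trans (dvd_of_eq hcop)
    have := Nat.le_of_dvd one_pos this
    have := hp.one_lt
    omega
  have hprime : Prime (p : ℤ) := Nat.prime_iff_prime_int.mp hp
  obtain ⟨e, f, ha, _, hdvd⟩ := fib_key_aux n hn p hp.one_lt.le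
  -- p divides e
  have hpe : (p : ℤ) ∣ e := by
    have h1 : (p : ℤ) ∣ 2 * e * t ^ 2 + (p : ℤ) * ((p : ℤ) - 1) * t ^ p :=
      hpc.trans hdvd
    have h2 : (p : ℤ) ∣ 2 * e * t ^ 2 := by
      have : (p : ℤ) ∣ (p : ℤ) * ((p : ℤ) - 1) * t ^ p := ⟨((p:ℤ)-1) * t^p, by ring⟩
      have := dvd_sub h1 this
      simpa using this
    rcases hprime.dvd_mul.mp h2 with h | h
    · rcases hprime.dvd_mul.mp h with h | h
      · exfalso
        have h2' : p ∣ 2 := by exact_mod_cast h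
        have hp2 : p = 2 := (Nat.prime_dvd_prime_iff_eq hp Nat.prime_two).mp h2'
        rw [hp2] at hodd
        simp [Nat.odd_iff] at hodd
      · exact h
    · exact absurd (hprime.dvd_of_dvd_pow h) hpt
  obtain ⟨e₁, rfl⟩ := hpe
  -- factorization
  have hfact : (Nat.fib (n * p) : ℤ) = (p : ℤ) * c * (t ^ (p - 1) + e₁ * c) := by
    rw [mul_comm n p, ha]; ring
  set u : ℤ := t ^ (p - 1) + e₁ * c with hu
  have hpu : ¬ (p : ℤ) ∣ u := by
    intro h
    have : (p : ℤ) ∣ t ^ (p - 1) := by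
      have : (p:ℤ) ∣ e₁ * c := Dvd.dvd.mul_left hpc e₁
      have := dvd_sub h this
      simpa [hu] using this
    exact hpt (hprime.dvd_of_dvd_pow this)
  have hu0 : u ≠ 0 := fun h => hpu (h ▸ dvd_zero _)
  have hcpos : (0 : ℤ) < c := by rw [hc]; exact_mod_cast hfibpos
  have hppos : (0 : ℤ) < (p : ℤ) := by exact_mod_cast hp.pos
  have hupos : 0 < u := by
    have hfp : (0 : ℤ) < (Nat.fib (n * p) : ℤ) := by
      exact_mod_cast Nat.fib_pos.mpr (Nat.mul_pos hn hp.pos)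
    rw [hfact] at hfp
    by_contra hcon
    push_neg at hcon
    nlinarith [mul_nonneg (mul_pos hppos hcpos).le (neg_nonneg.mpr hcon)]
  -- convert to ℕ
  have hnat : Nat.fib (n * p) = p * Nat.fib n * u.natAbs := by
    have : (Nat.fib (n * p) : ℤ) = ((p * Nat.fib n * u.natAbs : ℕ) : ℤ) := by
      push_cast
      rw [abs_of_pos hupos]
      exact hfact
    exact_mod_cast this
  rw [hnat, padicValNat.mul (Nat.mul_ne_zero hp.pos.ne' hfibpos.ne')
        (Int.natAbs_ne_zero.mpr hu0),
      padicValNat.mul hp.pos.ne' hfibpos.ne', padicValNat.self hp.one_lt, hval,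
      padicValNat.eq_zero_of_not_dvd (by rwa [← Int.natCast_dvd_natCast,
        Int.natAbs_of_nonneg hupos.le] ) ]
  omega
end

section
/- For every odd prime p, the p-adic valuation satisfies ν_p(F_{p*·p}) = ν_p(F_{p*}) + 1, where p* is the least positive integer n such that p divides F_n. -/
open Finset

/-- The Fibonacci Q-matrix. -/
private def Qf : Matrix (Fin 2) (Fin 2) ℕ := !![1, 1; 1, 0]

private lemma Qf_pow (n : ℕ) : Qf ^ (n + 1) =
    !![Nat.fib (n + 2), Nat.fib (n + 1); Nat.fib (n + 1), Nat.fib n] := by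
  induction n with
  | zero => simp [Qf]
  | succ n ih =>
    rw [pow_succ, ih]
    ext i j
    fin_cases i <;> fin_cases j <;>
      simp [Qf, Matrix.mul_apply, Fin.sum_univ_two, Nat.fib_add_two] <;> ring

private lemma Qf_pow_apply (i : ℕ) : (Qf ^ i) 0 1 = Nat.fib i := by
  cases i with
  | zero => simp [Matrix.one_apply]
  | succ n => rw [Qf_pow]; simp

private lemma Qf_decomp (m : ℕ) :
    Qf ^ (m + 1) = Nat.fib (m + 1) • Qf + Nat.fib m • (1 : Matrix (Fin 2) (Fin 2) ℕ) := by
  rw [Qf_pow]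
  ext i j
  fin_cases i <;> fin_cases j <;>
    simp [Qf, Matrix.smul_apply, Matrix.one_apply, smul_eq_mul, Nat.fib_add_two,
      ← Matrix.diagonal_natCast, Matrix.diagonal_apply, Nat.cast_id] <;> ring

/-- The key identity: `F_{(m+1)n} = ∑ C(n,i) F_{m+1}^i F_m^{n-i} F_i`. -/
private lemma fib_mul_sum (m n : ℕ) :
    Nat.fib ((m + 1) * n) =
      ∑ i ∈ Finset.range (n + 1),
        Nat.fib (m + 1) ^ i * Nat.fib m ^ (n - i) * n.choose i * Nat.fib i := by
  have hcomm : Commute (Nat.fib (m + 1) • Qf)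
      (Nat.fib m • (1 : Matrix (Fin 2) (Fin 2) ℕ)) := by
    apply Commute.smul_left
    apply Commute.smul_right
    exact Commute.one_right Qf
  calc Nat.fib ((m + 1) * n) = (Qf ^ ((m + 1) * n)) 0 1 := (Qf_pow_apply _).symm
    _ = ((Qf ^ (m + 1)) ^ n) 0 1 := by rw [← pow_mul]
    _ = ((Nat.fib (m + 1) • Qf + Nat.fib m • (1 : Matrix (Fin 2) (Fin 2) ℕ)) ^ n) 0 1 := by
        rw [Qf_decomp]
    _ = (∑ i ∈ Finset.range (n + 1),
          (Nat.fib (m + 1) • Qf) ^ i * (Nat.fib m • (1 : Matrix (Fin 2) (Fin 2) ℕ)) ^ (n - i) *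
            (n.choose i : Matrix (Fin 2) (Fin 2) ℕ)) 0 1 := by rw [hcomm.add_pow]
    _ = ∑ i ∈ Finset.range (n + 1),
          Nat.fib (m + 1) ^ i * Nat.fib m ^ (n - i) * n.choose i * Nat.fib i := by
        rw [Matrix.sum_apply]
        refine Finset.sum_congr rfl fun i _ => ?_
        have h1 : (Nat.fib (m + 1) • Qf) ^ i = Nat.fib (m + 1) ^ i • Qf ^ i := smul_pow _ _ _
        have h2 : (Nat.fib m • (1 : Matrix (Fin 2) (Fin 2) ℕ)) ^ (n - i)
            = Nat.fib m ^ (n - i) • (1 : Matrix (Fin 2) (Fin 2) ℕ) := by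
          rw [smul_pow, one_pow]
        have h3 : ((n.choose i : ℕ) : Matrix (Fin 2) (Fin 2) ℕ)
            = (n.choose i : ℕ) • (1 : Matrix (Fin 2) (Fin 2) ℕ) := by
          rw [nsmul_eq_mul, mul_one]
        rw [h1, h2, h3]
        have e1 : ∀ (x : ℕ) (M : Matrix (Fin 2) (Fin 2) ℕ),
            M * (x • (1 : Matrix (Fin 2) (Fin 2) ℕ)) = x • M := fun x M => by
          rw [mul_smul_comm, mul_one]
        have h4 : (Nat.fib (m + 1) ^ i • Qf ^ i) * (Nat.fib m ^ (n - i) • (1 : Matrix (Fin 2) (Fin 2) ℕ)) *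
            ((n.choose i) • (1 : Matrix (Fin 2) (Fin 2) ℕ))
            = (Nat.fib (m + 1) ^ i * Nat.fib m ^ (n - i) * n.choose i) • Qf ^ i := by
          rw [e1, e1, smul_smul, smul_smul]
          congr 1
          ring
        rw [h4, Matrix.smul_apply, Qf_pow_apply, smul_eq_mul]

/-- The shift map on pairs mod `p`, as an equivalence. -/
private def fibShift (p : ℕ) : ZMod p × ZMod p ≃ ZMod p × ZMod p where
  toFun x := (x.2, x.1 + x.2)
  invFun x := (x.2 - x.1, x.1)
  left_inv x := by simp
  right_inv x := by simp

private lemma fibShift_iterate (p n : ℕ) :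
    (fibShift p)^[n] ((0 : ZMod p), (1 : ZMod p))
      = ((Nat.fib n : ZMod p), (Nat.fib (n + 1) : ZMod p)) := by
  induction n with
  | zero => simp
  | succ n ih =>
    rw [Function.iterate_succ_apply', ih]
    simp only [fibShift, Equiv.coe_fn_mk]
    have : Nat.fib (n + 2) = Nat.fib n + Nat.fib (n + 1) := by
      rw [Nat.fib_add_two]
    rw [this]
    push_cast
    rfl

/-- Existence of the Fibonacci entry point. -/
private lemma exists_fib_entry (p : ℕ) (hp : p.Prime) :
    ∃ t : ℕ, 0 < t ∧ p ∣ Nat.fib t := by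
  haveI : NeZero p := ⟨hp.pos.ne'⟩
  obtain ⟨a, b, hab, heq⟩ := Finite.exists_ne_map_eq_of_infinite
    (fun n : ℕ => (fibShift p)^[n] ((0 : ZMod p), (1 : ZMod p)))
  wlog h : a < b generalizing a b
  · exact this b a hab.symm heq.symm (by omega)
  have hinj : Function.Injective (fibShift p)^[a] := (fibShift p).injective.iterate a
  have key : (fibShift p)^[b - a] ((0 : ZMod p), (1 : ZMod p)) = ((0 : ZMod p), (1 : ZMod p)) := by
    apply hinj
    rw [← Function.iterate_add_apply]
    have : a + (b - a) = b := by omega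
    rw [this]
    exact heq.symm
  refine ⟨b - a, by omega, ?_⟩
  have := fibShift_iterate p (b - a)
  rw [key] at this
  have h0 : ((Nat.fib (b - a) : ZMod p)) = 0 := by
    have := congrArg Prod.fst this
    simpa using this.symm
  exact (ZMod.natCast_eq_zero_iff _ _).mp h0

/-- `p*`, the least positive integer `t` such that `p ∣ F_t` (the Fibonacci entry point). -/
noncomputable def fibEntry (p : ℕ) : ℕ := sInf {t : ℕ | 0 < t ∧ p ∣ Nat.fib t}


theorem padicValNat_fib_entry_mul_prime (p : ℕ) (hp : p.Prime) (hodd : Odd p) :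
    padicValNat p (Nat.fib (fibEntry p * p)) =
      padicValNat p (Nat.fib (fibEntry p)) + 1 := by
  haveI : Fact p.Prime := ⟨hp⟩
  have hp3 : 3 ≤ p := by
    have h2 := hp.two_le
    have h1 : p % 2 = 1 := Nat.odd_iff.mp hodd
    omega
  -- properties of the entry point
  have hmem : 0 < fibEntry p ∧ p ∣ Nat.fib (fibEntry p) :=
    Nat.sInf_mem (exists_fib_entry p hp)
  obtain ⟨hkpos, hkdvd⟩ := hmem
  obtain ⟨m, hm⟩ : ∃ m, fibEntry p = m + 1 := ⟨fibEntry p - 1, by omega⟩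
  set k := fibEntry p with hk
  have hfibne : Nat.fib k ≠ 0 := (Nat.fib_pos.mpr hkpos).ne'
  set v := padicValNat p (Nat.fib k) with hv
  have hv1 : 1 ≤ v := by
    have := (padicValNat_dvd_iff 1 (Nat.fib k)).mp (by simpa using hkdvd)
    rcases this with h | h
    · exact absurd h hfibne
    · exact h
  -- p does not divide fib m
  have hpm : ¬ p ∣ Nat.fib m := by
    intro hdvd
    have hcop := Nat.fib_coprime_fib_succ m
    rw [← hm] at hcop
    have : p ∣ Nat.gcd (Nat.fib m) (Nat.fib k) := Nat.dvd_gcd hdvd hkdvd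
    rw [Nat.Coprime] at hcop
    rw [hcop] at this
    exact hp.one_lt.ne' (Nat.dvd_one.mp this)
  -- decompose fib k = p^v * c with p ∤ c
  set c := Nat.fib k / p ^ v with hcdef
  have hordc : ¬ p ∣ c := by
    have h := Nat.not_dvd_ordCompl hp hfibne
    rwa [Nat.factorization_def _ hp] at h
  have hcmul : p ^ v * c = Nat.fib k := by
    have h := Nat.ordProj_mul_ordCompl_eq_self (Nat.fib k) p
    rwa [Nat.factorization_def _ hp] at h
  -- the binomial sum identity
  set f : ℕ → ℕ := fun i => Nat.fib k ^ i * Nat.fib m ^ (p - i) * p.choose i * Nat.fib i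
    with hfdef
  have hsum : Nat.fib (k * p) = ∑ i ∈ Finset.range (p + 1), f i := by
    simp only [hfdef, hm]
    exact fib_mul_sum m p
  obtain ⟨r, hr⟩ : ∃ r, p = r + 2 := ⟨p - 2, by omega⟩
  have hpeel : ∑ i ∈ Finset.range (p + 1), f i =
      (∑ i ∈ Finset.range (r + 1), f (i + 2)) + f 1 + f 0 := by
    rw [hr]
    rw [Finset.sum_range_succ' f (r + 2), Finset.sum_range_succ' (fun i => f (i + 1)) (r + 1)]
  have hf0 : f 0 = 0 := by simp [hfdef]
  have hf1 : f 1 = p ^ (v + 1) * (c * Nat.fib m ^ (p - 1)) := by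
    simp only [hfdef, pow_one, Nat.choose_one_right, Nat.fib_one, mul_one]
    rw [← hcmul, pow_succ]
    ring
  -- tail divisibility
  have htail : p ^ (v + 2) ∣ ∑ i ∈ Finset.range (r + 1), f (i + 2) := by
    refine Finset.dvd_sum fun i hi => ?_
    have hi' : i ≤ r := by simpa using Nat.lt_succ_iff.mp (Finset.mem_range.mp hi)
    have hfib : p ^ v ∣ Nat.fib k := pow_padicValNat_dvd
    by_cases hcase : i + 2 < p
    · -- use p ∣ choose
      have h1 : p ^ (2 * v) ∣ Nat.fib k ^ (i + 2) := by
        calc p ^ (2 * v) = (p ^ v) ^ 2 := by ring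
          _ ∣ (Nat.fib k) ^ 2 := pow_dvd_pow_of_dvd hfib 2
          _ ∣ (Nat.fib k) ^ (i + 2) := pow_dvd_pow _ (by omega)
      have h2 : p ∣ p.choose (i + 2) := hp.dvd_choose_self (by omega) hcase
      have h3 : p ^ (2 * v) * p ∣ Nat.fib k ^ (i + 2) * p.choose (i + 2) :=
        mul_dvd_mul h1 h2
      have h4 : f (i + 2) = (Nat.fib k ^ (i + 2) * p.choose (i + 2)) *
          (Nat.fib m ^ (p - (i + 2)) * Nat.fib (i + 2)) := by
        simp only [hfdef]; ring
      have h5 : p ^ (v + 2) ∣ p ^ (2 * v) * p := by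
        rw [← pow_succ]
        exact pow_dvd_pow p (by omega)
      exact h5.trans (h3.trans (h4 ▸ dvd_mul_right _ _))
    · -- i + 2 = p, use fib k ^ p
      have hip : i + 2 = p := by omega
      have h1 : p ^ (3 * v) ∣ Nat.fib k ^ (i + 2) := by
        calc p ^ (3 * v) = (p ^ v) ^ 3 := by ring
          _ ∣ (Nat.fib k) ^ 3 := pow_dvd_pow_of_dvd hfib 3
          _ ∣ (Nat.fib k) ^ (i + 2) := pow_dvd_pow _ (by omega)
      have h4 : f (i + 2) = Nat.fib k ^ (i + 2) *
          (Nat.fib m ^ (p - (i + 2)) * p.choose (i + 2) * Nat.fib (i + 2)) := by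
        simp only [hfdef]; ring
      have h5 : p ^ (v + 2) ∣ p ^ (3 * v) := pow_dvd_pow p (by omega)
      exact h5.trans (h1.trans (h4 ▸ dvd_mul_right _ _))
  -- assemble
  set u := c * Nat.fib m ^ (p - 1) with hudef
  have hpu : ¬ p ∣ u := by
    intro hdvd
    rcases (Nat.Prime.dvd_mul hp).mp hdvd with h | h
    · exact hordc h
    · exact hpm (hp.dvd_of_dvd_pow h)
  set T := ∑ i ∈ Finset.range (r + 1), f (i + 2) with hTdef
  have hN : Nat.fib (k * p) = T + p ^ (v + 1) * u := by
    rw [hsum, hpeel, hf0, hf1, add_zero]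
  have hNdvd : p ^ (v + 1) ∣ Nat.fib (k * p) := by
    rw [hN]
    exact dvd_add ((pow_dvd_pow p (by omega)).trans htail) (dvd_mul_right _ _)
  have hNnot : ¬ p ^ (v + 2) ∣ Nat.fib (k * p) := by
    intro hdvd
    rw [hN] at hdvd
    have h6 : p ^ (v + 2) ∣ p ^ (v + 1) * u := (Nat.dvd_add_right htail).mp hdvd
    rw [pow_succ] at h6
    have h7 : p ∣ u := by
      have hpos : 0 < p ^ (v + 1) := pow_pos hp.pos _
      exact (Nat.mul_dvd_mul_iff_left hpos).mp h6
    exact hpu h7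
  have hNne : Nat.fib (k * p) ≠ 0 := by
    have : 0 < k * p := Nat.mul_pos hkpos hp.pos
    exact (Nat.fib_pos.mpr this).ne'
  have hle1 : v + 1 ≤ padicValNat p (Nat.fib (k * p)) := by
    rcases (padicValNat_dvd_iff (v + 1) (Nat.fib (k * p))).mp hNdvd with h | h
    · exact absurd h hNne
    · exact h
  have hle2 : padicValNat p (Nat.fib (k * p)) ≤ v + 1 := by
    by_contra hcon
    push_neg at hcon
    exact hNnot ((padicValNat_dvd_iff (v + 2) (Nat.fib (k * p))).mpr (Or.inr (by omega)))
  omega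
end

section
/- Let p be an odd prime not equal to 5, and let p* be the least positive integer n such that p divides F_n. Then ν_p(F_{(p*)²}) = ν_p(F_{p*}); that is, the p-adic valuation of the Fibonacci number with subscript (p*)² equals that of the Fibonacci number with subscript p*. -/
open Polynomial Nat AdjoinRoot

section alg
variable (p : ℕ) [Fact p.Prime]

noncomputable def fpoly : (ZMod p)[X] := X^2 - X - 1

lemma fpoly_deg : (fpoly p).degree = 2 := by
  unfold fpoly; compute_degree!

lemma fpoly_monic : (fpoly p).Monic := by
  have : fpoly p = X^2 - (X + 1) := by unfold fpoly; ring
  rw [this]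
  exact monic_X_pow_sub (lt_of_le_of_lt (degree_add_le _ _) (by simp))

lemma coeffs_zero (c₀ c₁ : ZMod p)
    (h : of (fpoly p) c₁ * root (fpoly p) + of (fpoly p) c₀ = 0) :
    c₁ = 0 ∧ c₀ = 0 := by
  have hmk : AdjoinRoot.mk (fpoly p) (C c₁ * X + C c₀) = 0 := by
    rw [map_add, map_mul, AdjoinRoot.mk_X, AdjoinRoot.mk_C, AdjoinRoot.mk_C]
    exact h
  rw [AdjoinRoot.mk_eq_zero] at hmk
  by_cases hg : (C c₁ * X + C c₀ : (ZMod p)[X]) = 0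
  · refine ⟨?_, ?_⟩
    · simpa using congrArg (fun q => Polynomial.coeff q 1) hg
    · simpa using congrArg (fun q => Polynomial.coeff q 0) hg
  · exact absurd hmk ((fpoly_monic p).not_dvd_of_degree_lt hg (by
      rw [fpoly_deg]
      exact lt_of_le_of_lt degree_linear_le (by norm_num)))

end alg

section more
variable (p : ℕ) [Fact p.Prime]

lemma root_sq : root (fpoly p) ^ 2 = root (fpoly p) + 1 := by
  have h : AdjoinRoot.mk (fpoly p) (X^2 - X - 1) = 0 := AdjoinRoot.mk_self
  rw [map_sub, map_sub, map_pow, AdjoinRoot.mk_X, map_one] at h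
  linear_combination h

lemma root_pow_fib : ∀ n : ℕ, root (fpoly p) ^ (n+1)
    = (fib (n+1) : AdjoinRoot (fpoly p)) * root (fpoly p) + (fib n : AdjoinRoot (fpoly p)) := by
  intro n
  induction n with
  | zero => simp
  | succ n ih =>
    rw [pow_succ, ih, fib_add_two]
    push_cast
    linear_combination (root_sq p) * (fib (n+1) : AdjoinRoot (fpoly p)) + root (fpoly p) * ih - root (fpoly p) * ih

lemma charP_A : CharP (AdjoinRoot (fpoly p)) p := by
  have hinj : Function.Injective (of (fpoly p)) := by
    intro a b hab
    have : of (fpoly p) 0 * root (fpoly p) + of (fpoly p) (a - b) = 0 := by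
      rw [map_zero, zero_mul, zero_add, map_sub, hab, sub_self]
    exact sub_eq_zero.mp (coeffs_zero p _ _ this).2
  exact charP_of_injective_ringHom hinj p

end more

theorem fib_dvd_near (p : ℕ) (hp : p.Prime) (hodd : Odd p) (hp5 : p ≠ 5) :
    p ∣ fib (p-1) ∨ p ∣ fib (p+1) := by
  haveI : Fact p.Prime := ⟨hp⟩
  haveI := charP_A p
  set A := AdjoinRoot (fpoly p) with hA
  set α := root (fpoly p) with hα
  set s : ZMod p := 5 ^ ((p-1)/2) with hs
  have hof5 : of (fpoly p) s = (5:A) ^ ((p-1)/2) := by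
    rw [hs, map_pow, map_ofNat]
  have hp2 : 2 ≤ p := hp.two_le
  have hpsplit : p = (p - 1) + 1 := (Nat.succ_pred_eq_of_pos (by omega)).symm
  have h2odd : (2 * ((p-1)/2) + 1 : ℕ) = p := by
    obtain ⟨k, hk⟩ := hodd; omega
  have hsq : (2*α - 1)^2 = 5 := by
    have := root_sq p
    linear_combination (4 : A) * this
  have h2p : (2 : A)^p = 2 := by
    rw [show (2:A) = of (fpoly p) 2 from (map_ofNat _ 2).symm, ← map_pow, ZMod.pow_card]
  have hchar : (2*α - 1)^p = 2 * α^p - 1 := by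
    have hfr : (2*α + (-1))^p = (2*α)^p + (-1)^p := add_pow_char _ _ _
    rw [hodd.neg_one_pow] at hfr
    calc (2*α - 1)^p = (2*α + (-1))^p := by ring_nf
      _ = (2*α)^p + (-1) := hfr
      _ = 2 * α^p - 1 := by rw [mul_pow, h2p]; ring
  have hgeo : (2*α - 1)^p = of (fpoly p) s * (2*α - 1) := by
    calc (2*α - 1)^p = ((2*α-1)^2)^((p-1)/2) * (2*α-1) := by
          rw [← pow_mul, ← pow_succ, h2odd]
      _ = _ := by rw [hsq, hof5]
  have hap : α ^ p = (fib p : A) * α + (fib (p-1) : A) := by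
    have h := root_pow_fib p (p-1)
    rwa [← hpsplit] at h
  have hnat : ∀ n : ℕ, (n : A) = of (fpoly p) (n : ZMod p) := by
    intro n; rw [map_natCast]
  have key : of (fpoly p) (2 * (fib p : ZMod p) - 2 * s) * α
      + of (fpoly p) (2 * (fib (p-1) : ZMod p) - 1 + s) = 0 := by
    have heq : (2:A) * α^p - 1 = of (fpoly p) s * (2*α - 1) := by rw [← hchar, hgeo]
    rw [hap, hnat (fib p), hnat (fib (p-1))] at heq
    simp only [map_sub, map_add, map_mul, map_one, map_ofNat]
    linear_combination heq
  obtain ⟨h1, h0⟩ := coeffs_zero p _ _ key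
  -- fib p ≡ s mod p
  have h2ne : (2 : ZMod p) ≠ 0 := by
    have : ((2:ℕ) : ZMod p) ≠ 0 := by
      rw [Ne, ZMod.natCast_eq_zero_iff]
      intro h
      rw [(Nat.prime_dvd_prime_iff_eq hp Nat.prime_two).mp h] at hodd
      simp [Nat.odd_iff] at hodd
    simpa using this
  have hfp : (fib p : ZMod p) = s := by
    have h1' : (2:ZMod p) * (fib p : ZMod p) = 2 * s := by linear_combination h1
    exact mul_left_cancel₀ h2ne h1'
  have h5ne : (5 : ZMod p) ≠ 0 := by
    have : ((5:ℕ) : ZMod p) ≠ 0 := by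
      rw [Ne, ZMod.natCast_eq_zero_iff]
      intro h
      exact hp5 ((Nat.prime_dvd_prime_iff_eq hp (by norm_num)).mp h)
    simpa using this
  have hs2 : s ^ 2 = 1 := by
    rw [hs, ← pow_mul, mul_comm ((p-1)/2) 2, show 2 * ((p-1)/2) = p - 1 by omega]
    exact ZMod.pow_card_sub_one_eq_one h5ne
  have hpm : s = 1 ∨ s = -1 := by
    have : (s - 1) * (s + 1) = 0 := by linear_combination hs2
    rcases mul_eq_zero.mp this with h | h
    · left; exact sub_eq_zero.mp h
    · right; exact eq_neg_of_add_eq_zero_left h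
  rcases hpm with h | h
  · -- s = 1 : 2 * fib (p-1) = 0
    left
    rw [← ZMod.natCast_eq_zero_iff]
    have : (2 : ZMod p) * (fib (p-1) : ZMod p) = 0 := by
      rw [h] at h0; linear_combination h0
    rcases mul_eq_zero.mp this with h' | h'
    · exact absurd h' h2ne
    · exact h'
  · -- s = -1 : fib (p-1) = 1, fib p = -1
    right
    rw [← ZMod.natCast_eq_zero_iff]
    have hb : (fib (p-1) : ZMod p) = 1 := by
      rw [h] at h0
      have h2 : (2 : ZMod p) * ((fib (p-1) : ZMod p) - 1) = 0 := by linear_combination h0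
      rcases mul_eq_zero.mp h2 with h' | h'
      · exact absurd h' h2ne
      · exact sub_eq_zero.mp h'
    have hfib : fib (p+1) = fib (p-1) + fib p := by
      conv_lhs => rw [hpsplit]
      rw [show p - 1 + 1 + 1 = (p-1) + 2 by omega, fib_add_two, ← hpsplit]
    rw [hfib]
    push_cast
    rw [hb, hfp, h]
    ring

lemma fib_mul_add_one_modeq (m : ℕ) : ∀ k : ℕ,
    fib (m * k + 1) ≡ fib (m+1) ^ k [MOD fib m] := by
  intro k
  induction k with
  | zero => simp [Nat.ModEq.refl]
  | succ k ih =>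
    have hidx : m * (k+1) + 1 = m * k + m + 1 := by ring
    rw [hidx, fib_add (m*k) m, pow_succ]
    have h1 : fib (m*k) * fib m ≡ 0 [MOD fib m] :=
      (Nat.modEq_zero_iff_dvd).mpr (Dvd.dvd.mul_left (dvd_refl _) _)
    calc fib (m*k) * fib m + fib (m*k+1) * fib (m+1)
        ≡ 0 + fib (m+1)^k * fib (m+1) [MOD fib m] := h1.add (ih.mul_right _)
      _ = fib (m+1)^k * fib (m+1) := by ring

lemma fib_mul_modeq (r : ℕ) : ∀ k : ℕ,
    fib ((r+1) * (k+1)) ≡ (k+1) * fib (r+1) * fib (r+2) ^ k [MOD fib (r+1) ^ 2] := by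
  intro k
  induction k with
  | zero => simp [Nat.ModEq.refl]
  | succ k ih =>
    have hidx : (r+1) * (k+2) = (r+1)*(k+1) + r + 1 := by ring
    rw [hidx, fib_add ((r+1)*(k+1)) r]
    have hsq : fib (r+1) ^ 2 = fib (r+1) * fib (r+1) := sq (fib (r+1))
    -- term 2
    have h2 : fib ((r+1)*(k+1) + 1) * fib (r+1) ≡ fib (r+2)^(k+1) * fib (r+1)
        [MOD fib (r+1) ^ 2] := by
      rw [hsq]
      exact ((fib_mul_add_one_modeq (r+1) (k+1)).mul_right' (fib (r+1)))
    -- term 1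
    have h1 : fib ((r+1)*(k+1)) * fib r ≡ (k+1) * fib (r+1) * fib (r+2)^k * fib (r+2)
        [MOD fib (r+1) ^ 2] := by
      calc fib ((r+1)*(k+1)) * fib r
          ≡ (k+1) * fib (r+1) * fib (r+2)^k * fib r [MOD fib (r+1)^2] := ih.mul_right _
        _ ≡ (k+1) * fib (r+1) * fib (r+2)^k * fib (r+2) [MOD fib (r+1)^2] := by
            have hbase : fib r ≡ fib (r+2) [MOD fib (r+1)] := by
              rw [fib_add_two]
              exact (Nat.add_mod_right _ _).symm
            have hdvd : fib (r+1)^2 ∣ ((k+1) * fib (r+1) * fib (r+2)^k) * fib (r+1) := by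
              rw [hsq]
              exact mul_dvd_mul (Dvd.dvd.mul_right (Dvd.dvd.mul_left (dvd_refl _) _) _) (dvd_refl _)
            exact Nat.ModEq.of_dvd hdvd (Nat.ModEq.mul_left' _ hbase)
    calc fib ((r+1)*(k+1)) * fib r + fib ((r+1)*(k+1)+1) * fib (r+1)
        ≡ (k+1) * fib (r+1) * fib (r+2)^k * fib (r+2) + fib (r+2)^(k+1) * fib (r+1)
          [MOD fib (r+1)^2] := h1.add h2
      _ = (k+2) * fib (r+1) * fib (r+2)^(k+1) := by ring

theorem padicValNat_fib_entry_sq (p : ℕ) (hp : p.Prime) (hodd : Odd p) (hp5 : p ≠ 5) :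
    padicValNat p (Nat.fib (fibEntry p ^ 2)) =
      padicValNat p (Nat.fib (fibEntry p)) := by
  haveI : Fact p.Prime := ⟨hp⟩
  have hp3 : 3 ≤ p := by
    rcases hp.two_le.lt_or_eq with h | h
    · omega
    · exfalso; rw [← h] at hodd; simp [Nat.odd_iff] at hodd
  have hne : {t : ℕ | 0 < t ∧ p ∣ Nat.fib t}.Nonempty := by
    rcases fib_dvd_near p hp hodd hp5 with h | h
    · exact ⟨p - 1, by omega, h⟩
    · exact ⟨p + 1, by omega, h⟩
  set m := fibEntry p with hm
  have hmem : 0 < m ∧ p ∣ fib m := Nat.sInf_mem hne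
  obtain ⟨hmpos, hmdvd⟩ := hmem
  have hfibne : fib m ≠ 0 := Nat.pos_iff_ne_zero.mp (fib_pos.mpr hmpos)
  have hdvd_all : ∀ n : ℕ, p ∣ fib n → m ∣ n := by
    intro n hn
    rcases Nat.eq_zero_or_pos n with rfl | hnpos
    · exact dvd_zero m
    have hg : p ∣ fib (Nat.gcd m n) := by
      rw [fib_gcd]; exact Nat.dvd_gcd hmdvd hn
    have hgpos : 0 < Nat.gcd m n := Nat.gcd_pos_of_pos_right m hnpos
    have h1 : m ≤ Nat.gcd m n := Nat.sInf_le ⟨hgpos, hg⟩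
    have h2 : Nat.gcd m n ≤ m := Nat.le_of_dvd hmpos (Nat.gcd_dvd_left m n)
    have : Nat.gcd m n = m := le_antisymm h2 h1
    rw [← this]; exact Nat.gcd_dvd_right m n
  have hpm : ¬ p ∣ m := by
    intro hpdvd
    rcases fib_dvd_near p hp hodd hp5 with h | h
    · have := (hpdvd.trans (hdvd_all _ h))
      have := Nat.le_of_dvd (by omega) this
      omega
    · have := (hpdvd.trans (hdvd_all _ h))
      have h1 : p ∣ 1 := (Nat.dvd_add_right (dvd_refl p)).mp this
      simp at h1; omega
  have hfm1 : ¬ p ∣ fib (m+1) := by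
    intro h
    have := Nat.dvd_gcd hmdvd h
    rw [Nat.Coprime.gcd_eq_one (fib_coprime_fib_succ m)] at this
    have := Nat.le_of_dvd one_pos this
    omega
  set e := padicValNat p (fib m) with he
  have he1 : 1 ≤ e := by
    rw [he, ← padicValNat_dvd_iff_le hfibne]
    simpa using hmdvd
  -- the key congruence
  have H : fib (m*m) ≡ m * fib m * fib (m+1) ^ (m-1) [MOD fib m ^ 2] := by
    have h := fib_mul_modeq (m-1) (m-1)
    rw [show m - 1 + 1 = m by omega, show m - 1 + 2 = m + 1 by omega] at h
    exact h
  set R := m * fib m * fib (m+1) ^ (m-1) with hR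
  have hpe_dvd_sq : p ^ (e+1) ∣ fib m ^ 2 := by
    have h1 : p ^ e ∣ fib m := pow_padicValNat_dvd
    have h2 : p ^ (2*e) ∣ fib m ^ 2 := by
      rw [two_mul, pow_add, pow_two]
      exact mul_dvd_mul h1 h1
    exact (pow_dvd_pow p (by omega)).trans h2
  have H' : fib (m*m) ≡ R [MOD p ^ (e+1)] := Nat.ModEq.of_dvd hpe_dvd_sq H
  have hRe : p ^ e ∣ R := by
    rw [hR]
    exact (pow_padicValNat_dvd).mul_left m |>.mul_right _
  have hRne : ¬ p ^ (e+1) ∣ R := by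
    intro h
    have hcop : Nat.Coprime (p ^ (e+1)) (m * fib (m+1) ^ (m-1)) := by
      apply Nat.Coprime.pow_left
      exact Nat.Coprime.mul_right ((hp.coprime_iff_not_dvd).mpr hpm)
        (Nat.Coprime.pow_right _ ((hp.coprime_iff_not_dvd).mpr hfm1))
    have hre : R = fib m * (m * fib (m+1) ^ (m-1)) := by rw [hR]; ring
    rw [hre] at h
    have := (Nat.Coprime.dvd_of_dvd_mul_right hcop) h
    exact pow_succ_padicValNat_not_dvd hfibne this
  have hNne : fib (m*m) ≠ 0 :=
    Nat.pos_iff_ne_zero.mp (fib_pos.mpr (Nat.mul_pos hmpos hmpos))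
  have hNe : p ^ e ∣ fib (m*m) := by
    have H'' : fib (m*m) ≡ R [MOD p ^ e] :=
      Nat.ModEq.of_dvd (pow_dvd_pow p (by omega)) H'
    have : fib (m*m) ≡ 0 [MOD p ^ e] :=
      H''.trans ((Nat.modEq_zero_iff_dvd).mpr hRe)
    exact (Nat.modEq_zero_iff_dvd).mp this
  have hNne' : ¬ p ^ (e+1) ∣ fib (m*m) := by
    intro h
    apply hRne
    have : R ≡ 0 [MOD p ^ (e+1)] := H'.symm.trans ((Nat.modEq_zero_iff_dvd).mpr h)
    exact (Nat.modEq_zero_iff_dvd).mp this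
  rw [pow_two]
  refine le_antisymm ?_ ?_
  · by_contra hlt
    push_neg at hlt
    exact hNne' ((padicValNat_dvd_iff_le hNne).mpr (by omega))
  · exact (padicValNat_dvd_iff_le hNne).mp hNe
end
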